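/- arXiv:0809.0493 — 5 statements merged into one kernel-verified Lean document; each statement's English description precedes it below -/
import Mathlib

section
/- Let p be a prime and X an extraspecial group of order p^3 with center Z. If T₀ is an elementary abelian p-subgroup of rank 2 of a group P containing X, with T₀ normalizing X and normalizing every subgroup of index p of X that contains Z, then T₀ acts on X by inner automorphisms. -/
/-!
Conjugation by `t ∈ T₀` restricts to an automorphism `φ` of `X` with `φ ^ p = 1`. The quotient
`X ⧸ Z` has order `p²` and exponent `p`. For `q ∈ X ⧸ Z` the preimage of `⟨q⟩` is a subgroup of
index `p` containing `Z`, so the induced map sends `q` to some `q ^ k`; iterating `p` times gives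
`q = q ^ (k ^ p) = q ^ k` by Fermat's little theorem. Hence `φ x ∈ Z x` for every `x`. For
noncommuting `a, b` the commutator `c = ⁅a, b⁆` generates `Z`, and if `φ a = c ^ m * a`,
`φ b = c ^ n * b`, then `φ` agrees with conjugation by `a ^ n * b ^ (-m)` on `a` and `b`, which
generate `X`.
-/

open Subgroup
open scoped commutatorElement

theorem MonoidHom.apply_eq_self_of_apply_eq_zpow {H : Type*} [Group H] {p : ℕ}
    [hp : Fact p.Prime] (f : H →* H) {g : H} (hg : g ^ p = 1) {k : ℤ} (hk : f g = g ^ k)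
    (hf : f^[p] g = g) : f g = g := by
  have hiterate : ∀ j : ℕ, f^[j] g = g ^ (k ^ j) := by
    intro j
    induction j with
    | zero => simp
    | succ j ih => rw [Function.iterate_succ_apply', ih, map_zpow, hk, ← zpow_mul, pow_succ']
  have fermat : g ^ (k ^ p) = g ^ k :=
    zpow_eq_zpow_iff_modEq.mpr <| (Int.ModEq.pow_prime_eq_self hp.out k).of_dvd <|
      Int.natCast_dvd_natCast.mpr (orderOf_dvd_of_pow_eq_one hg)
  rw [hk, ← fermat, ← hiterate, hf]

section

variable {G : Type*} [Group G]

theorem pow_prime_eq_one_of_card_eq_prime_sq {p : ℕ} [hp : Fact p.Prime]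
    (hcard : Nat.card G = p ^ 2) (hG : ¬ IsCyclic G) (g : G) : g ^ p = 1 := by
  have : Finite G := Nat.finite_of_card_ne_zero (by simp [hcard, hp.out.ne_zero])
  obtain ⟨i, hi, hgi⟩ := (Nat.dvd_prime_pow hp.out).mp (hcard ▸ orderOf_dvd_natCard g)
  have hi1 : i ≤ 1 := by
    by_contra! hi2
    exact hG (isCyclic_of_orderOf_eq_card g (by rw [hgi, hcard, show i = 2 by omega]))
  exact orderOf_dvd_iff_pow_eq_one.mp (hgi ▸ (Nat.pow_dvd_pow p hi1).trans (pow_one p).dvd)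

theorem zpow_mul_mul_zpow_inv_of_commutatorElement_mem_center {g h : G}
    (hc : ⁅g, h⁆ ∈ center G) (k : ℤ) : g ^ k * h * (g ^ k)⁻¹ = ⁅g, h⁆ ^ k * h := by
  have hconj : h * g * h⁻¹ = ⁅g, h⁆⁻¹ * g := by rw [commutatorElement_def]; group
  have hpow : h * g ^ k * h⁻¹ = ⁅g, h⁆⁻¹ ^ k * g ^ k := by
    rw [← conj_zpow, hconj, Commute.mul_zpow ((mem_center_iff.mp (inv_mem hc)) g).symm]
  calc g ^ k * h * (g ^ k)⁻¹ = (h * g ^ k * h⁻¹ * (g ^ k)⁻¹)⁻¹ * h := by group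
    _ = ⁅g, h⁆ ^ k * h := by rw [hpow, mul_inv_cancel_right, inv_zpow, inv_inv]

theorem Subgroup.eq_zpowers_of_card_eq_prime {p : ℕ} [hp : Fact p.Prime] {H : Subgroup G}
    (hH : Nat.card H = p) {c : G} (hc : c ∈ H) (hc1 : c ≠ 1) : H = zpowers c := by
  have : Finite H := Nat.finite_of_card_ne_zero (hH ▸ hp.out.ne_zero)
  have horder : orderOf c = p :=
    (hp.out.eq_one_or_self_of_dvd _ (hH ▸ Subgroup.orderOf_dvd_natCard H hc)).resolve_left
      (fun h ↦ hc1 (orderOf_eq_one_iff.mp h))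
  exact (eq_of_le_of_card_ge (zpowers_le.mpr hc) (by rw [hH, Nat.card_zpowers, horder])).symm

variable {p : ℕ} [hp : Fact p.Prime]

theorem card_quotient_center_eq_prime_sq (hG : Nat.card G = p ^ 3)
    (hZ : Nat.card (center G) = p) : Nat.card (G ⧸ center G) = p ^ 2 := by
  have h := (center G).card_eq_card_quotient_mul_card_subgroup
  rw [hG, hZ, pow_succ] at h
  exact (Nat.eq_of_mul_eq_mul_right hp.out.pos h).symm

theorem exists_not_commute_of_card_center_eq_prime (hG : Nat.card G = p ^ 3)
    (hZ : Nat.card (center G) = p) : ∃ a b : G, ¬ Commute a b := by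
  by_contra! hcomm
  have htop : center G = ⊤ := (eq_top_iff' _).mpr fun g ↦ mem_center_iff.mpr fun h ↦ hcomm h g
  have hp3 : p ^ 3 = p ^ 1 := by rw [← hG, ← card_top, ← htop, hZ, pow_one]
  have := Nat.pow_right_injective hp.out.two_le hp3
  omega

theorem not_isCyclic_quotient_center (hG : Nat.card G = p ^ 3)
    (hZ : Nat.card (center G) = p) : ¬ IsCyclic (G ⧸ center G) := by
  intro hcyc
  obtain ⟨a, b, hab⟩ := exists_not_commute_of_card_center_eq_prime hG hZ
  have := (QuotientGroup.mk' (center G)).isMulCommutative_of_isCyclic_of_ker_le_center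
    (QuotientGroup.ker_mk' _).le
  exact hab (Std.Commutative.comm a b)

theorem commutatorElement_mem_center (hG : Nat.card G = p ^ 3)
    (hZ : Nat.card (center G) = p) (a b : G) : ⁅a, b⁆ ∈ center G := by
  have := IsPGroup.isMulCommutative_of_card_eq_prime_sq (card_quotient_center_eq_prime_sq hG hZ)
  rw [← QuotientGroup.eq_one_iff, ← QuotientGroup.mk'_apply, map_commutatorElement,
    commutatorElement_eq_one_iff_commute]
  exact Std.Commutative.comm _ _

theorem Subgroup.eq_top_of_mem_of_not_commute (hG : Nat.card G = p ^ 3) {H : Subgroup G} {a b : G}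
    (ha : a ∈ H) (hb : b ∈ H) (hab : ¬ Commute a b) : H = ⊤ := by
  have : Finite G := Nat.finite_of_card_ne_zero (by simp [hG, hp.out.ne_zero])
  obtain ⟨i, hi, hHi⟩ := (Nat.dvd_prime_pow hp.out).mp (hG ▸ H.card_subgroup_dvd_card)
  have hi3 : i = 3 := by
    by_contra hi3
    have hH : IsMulCommutative H := by
      rcases (show i ≤ 1 ∨ i = 2 by omega) with hi1 | rfl
      · have := isCyclic_of_card_dvd_prime (α := H) (p := p)
          (hHi ▸ (Nat.pow_dvd_pow p hi1).trans (pow_one p).dvd)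
        infer_instance
      · exact IsPGroup.isMulCommutative_of_card_eq_prime_sq hHi
    exact hab (congrArg Subtype.val (hH.is_comm.comm (⟨a, ha⟩ : H) ⟨b, hb⟩))
  exact (card_eq_iff_eq_top H).mp (by rw [hHi, hG, hi3])

theorem MulAut.mk_apply_eq_mk_of_forall_index_eq_prime (hG : Nat.card G = p ^ 3)
    (hZ : Nat.card (center G) = p) (φ : MulAut G) (hφ : φ ^ p = 1)
    (hY : ∀ Y : Subgroup G, center G ≤ Y → Y.index = p → ∀ y ∈ Y, φ y ∈ Y) (x : G) :
    (φ x : G ⧸ center G) = x := by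
  have hQ := card_quotient_center_eq_prime_sq hG hZ
  let φbar : G ⧸ center G →* G ⧸ center G :=
    QuotientGroup.map _ _ φ.toMonoidHom (characteristic_iff_le_comap.mp inferInstance φ)
  have hsemiconj : Function.Semiconj ((↑) : G → G ⧸ center G) φ φbar := fun _ ↦ rfl
  set q : G ⧸ center G := QuotientGroup.mk x
  have hq : q ^ p = 1 :=
    pow_prime_eq_one_of_card_eq_prime_sq hQ (not_isCyclic_quotient_center hG hZ) q
  obtain ⟨k, hk⟩ : ∃ k : ℤ, φbar q = q ^ k := by
    by_cases hq1 : q = 1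
    · exact ⟨0, by rw [hq1, map_one, one_zpow]⟩
    have hindex : ((zpowers q).comap (QuotientGroup.mk' (center G))).index = p := by
      have := (zpowers q).index_mul_card
      rw [Nat.card_zpowers, orderOf_eq_prime hq hq1, hQ, sq] at this
      rw [index_comap_of_surjective _ (QuotientGroup.mk'_surjective _)]
      exact Nat.eq_of_mul_eq_mul_right hp.out.pos this
    have hZY : center G ≤ (zpowers q).comap (QuotientGroup.mk' (center G)) :=
      (QuotientGroup.ker_mk' (center G)).ge.trans (MonoidHom.ker_le_comap _ _)
    obtain ⟨k, hk⟩ := mem_zpowers_iff.mp (hY _ hZY hindex x (mem_zpowers q))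
    exact ⟨k, hk.symm⟩
  have hperiodic : φbar^[p] q = q := by
    have hiterate : (⇑φ)^[p] = ⇑(φ ^ p) :=
      (congrArg DFunLike.coe (map_pow (MulAut.toPerm G) φ p)).symm
    rw [← (hsemiconj.iterate_right p) x, hiterate, hφ, MulAut.one_apply]
  exact MonoidHom.apply_eq_self_of_apply_eq_zpow φbar hq hk hperiodic

theorem MulAut.exists_eq_conj_of_forall_mk_apply_eq_mk (hG : Nat.card G = p ^ 3)
    (hZ : Nat.card (center G) = p) (φ : MulAut G)
    (hφ : ∀ x, (φ x : G ⧸ center G) = x) : ∃ g, φ = MulAut.conj g := by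
  obtain ⟨a, b, hab⟩ := exists_not_commute_of_card_center_eq_prime hG hZ
  have hc := commutatorElement_mem_center hG hZ a b
  set c := ⁅a, b⁆ with hc_def
  clear_value c
  have hZc : center G = zpowers c :=
    eq_zpowers_of_card_eq_prime hZ hc (hc_def ▸ mt commutatorElement_eq_one_iff_commute.mp hab)
  have hshift : ∀ x, ∃ m : ℤ, φ x = c ^ m * x := fun x ↦ by
    have hx := QuotientGroup.eq.mp (hφ x).symm
    rw [hZc] at hx
    obtain ⟨m, hm⟩ := mem_zpowers_iff.mp hx
    refine ⟨m, ?_⟩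
    rw [← mem_center_iff.mp (zpow_mem hc m), hm, mul_inv_cancel_left]
  obtain ⟨m, hm⟩ := hshift a
  obtain ⟨n, hn⟩ := hshift b
  have hφa : φ a = MulAut.conj (a ^ n * b ^ (-m)) a := by
    have hba : b ^ (-m) * a * (b ^ (-m))⁻¹ = c ^ m * a := by
      rw [zpow_mul_mul_zpow_inv_of_commutatorElement_mem_center
        (commutatorElement_mem_center hG hZ b a), ← commutatorElement_inv, ← hc_def, inv_zpow',
        neg_neg]
    calc φ a = c ^ m * a := hm
      _ = a ^ n * (c ^ m * a) * (a ^ n)⁻¹ := by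
        rw [← mul_assoc, mem_center_iff.mp (zpow_mem hc m)]; group
      _ = MulAut.conj (a ^ n * b ^ (-m)) a := by rw [← hba, MulAut.conj_apply]; group
  have hφb : φ b = MulAut.conj (a ^ n * b ^ (-m)) b := by
    rw [hn, MulAut.conj_apply, hc_def,
      ← zpow_mul_mul_zpow_inv_of_commutatorElement_mem_center (hc_def ▸ hc)]
    group
  have hclosure : closure {a, b} = ⊤ :=
    eq_top_of_mem_of_not_commute hG (subset_closure (by simp)) (subset_closure (by simp)) hab
  refine ⟨a ^ n * b ^ (-m), MulEquiv.toMonoidHom_injective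
    (MonoidHom.eq_of_eqOn_dense hclosure ?_)⟩
  rintro x (rfl | rfl)
  exacts [hφa, hφb]

theorem MulAut.exists_eq_conj_of_forall_index_eq_prime (hG : Nat.card G = p ^ 3)
    (hZ : Nat.card (center G) = p) (φ : MulAut G) (hφ : φ ^ p = 1)
    (hY : ∀ Y : Subgroup G, center G ≤ Y → Y.index = p → ∀ y ∈ Y, φ y ∈ Y) :
    ∃ g, φ = MulAut.conj g :=
  exists_eq_conj_of_forall_mk_apply_eq_mk hG hZ φ
    (mk_apply_eq_mk_of_forall_index_eq_prime hG hZ φ hφ hY)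

end

theorem pow_eq_one_of_mulEquiv_zmod_prod {G : Type*} [Group G] {p : ℕ}
    (e : G ≃* Multiplicative (ZMod p) × Multiplicative (ZMod p)) (g : G) : g ^ p = 1 :=
  e.injective <| by
    rw [map_pow, map_one]
    ext <;> apply Multiplicative.toAdd.injective <;> simp

theorem elemAb_normalizing_acts_by_inner_general {p : ℕ} (hp : p.Prime)
    (P : Type*) [Group P]
    (X : Subgroup P) (hXcard : Nat.card X = p ^ 3)
    (Z : Subgroup P) (hZ : Z = Subgroup.map X.subtype (Subgroup.center X))
    (hZcard : Nat.card Z = p)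
    (T₀ : Subgroup P)
    (hT₀ : Nonempty (T₀ ≃* (Multiplicative (ZMod p) × Multiplicative (ZMod p))))
    (hT₀X : T₀ ≤ Subgroup.normalizer (X : Set P))
    (hT₀Y : ∀ Y : Subgroup P, Y ≤ X → Z ≤ Y → Nat.card Y * p = Nat.card X →
      T₀ ≤ Subgroup.normalizer (Y : Set P)) :
    ∀ t ∈ T₀, ∃ y ∈ X, ∀ x ∈ X, t * x * t⁻¹ = y * x * y⁻¹ := by
  have : Fact p.Prime := ⟨hp⟩
  intro t ht
  let φ := X.normalizerMonoidHom ⟨t, hT₀X ht⟩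
  have hφ : φ ^ p = 1 := by
    have htp : (⟨t, ht⟩ : T₀) ^ p = 1 := pow_eq_one_of_mulEquiv_zmod_prod hT₀.some _
    rw [← map_pow, ← map_one X.normalizerMonoidHom]
    congr 1
    exact Subtype.ext (by simpa using congrArg Subtype.val htp)
  have hcenter : Nat.card (center X) = p := by
    rw [← hZcard, hZ, card_map_of_injective X.subtype_injective]
  have hY : ∀ Y : Subgroup X, center X ≤ Y → Y.index = p → ∀ y ∈ Y, φ y ∈ Y := by
    intro Y hZY hYp y hy
    have hYnorm := hT₀Y (Y.map X.subtype) (map_subtype_le Y) (hZ ▸ map_mono hZY)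
      (by rw [card_map_of_injective X.subtype_injective, ← hYp, Y.card_mul_index]) ht
    rw [← mem_map_iff_mem X.subtype_injective]
    exact (mem_normalizer_iff.mp hYnorm y).mp (mem_map_of_mem _ hy)
  obtain ⟨g, hg⟩ := MulAut.exists_eq_conj_of_forall_index_eq_prime hXcard hcenter φ hφ hY
  refine ⟨g, g.2, fun x hx ↦ ?_⟩
  exact congrArg Subtype.val (DFunLike.congr_fun hg ⟨x, hx⟩)

/-- Let `X` be an extraspecial subgroup of order `p^3` of a group `P`, with
centre `Z` (of order `p`). If `T₀` is an elementary abelian subgroup of rank `2` of `P`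
normalising `X` and normalising every subgroup of index `p` of `X` containing `Z`, then
`T₀` acts on `X` by inner automorphisms. -/
theorem elemAb_normalizing_acts_by_inner {p : ℕ} (hp : p.Prime)
    (P : Type*) [Group P] [Finite P]
    (X : Subgroup P) (hXcard : Nat.card X = p ^ 3)
    (Z : Subgroup P) (hZ : Z = Subgroup.map X.subtype (Subgroup.center X))
    (hZcard : Nat.card Z = p)
    (T₀ : Subgroup P)
    (hT₀ : Nonempty (T₀ ≃* (Multiplicative (ZMod p) × Multiplicative (ZMod p))))
    (hT₀X : T₀ ≤ Subgroup.normalizer (X : Set P))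
    (hT₀Y : ∀ Y : Subgroup P, Y ≤ X → Z ≤ Y → Nat.card Y * p = Nat.card X →
      T₀ ≤ Subgroup.normalizer (Y : Set P)) :
    ∀ t ∈ T₀, ∃ y ∈ X, ∀ x ∈ X, t * x * t⁻¹ = y * x * y⁻¹ :=
  elemAb_normalizing_acts_by_inner_general hp P X hXcard Z hZ hZcard T₀ hT₀ hT₀X hT₀Y
end

section
/- Let P be an extraspecial p-group of order p^3 and exponent p (p odd) with center Z, let R be a non-central subgroup of order p, and let Q be a subgroup of order p². Then the number of subgroups V ≤ Q that are P-conjugate to R is p if R ≤ Q, and 0 if R ≰ Q. -/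
/-- The conjugate of a subgroup by a group element. -/
def conjSub {P : Type*} [Group P] (g : P) (R : Subgroup P) : Subgroup P :=
  Subgroup.map (MulAut.conj g).toMonoidHom R

/-- Let `P` be extraspecial of order `p^3` and exponent `p` (`p` odd) with
centre `Z`, let `R` be a non-central subgroup of order `p` and `Q` a subgroup of order `p²`.
Then the number of subgroups `V ≤ Q` that are `P`-conjugate to `R` is `p` if `R ≤ Q`,
and `0` if `R ≰ Q`. -/
theorem count_conjugates_in_maximal {p : ℕ} (hp : p.Prime) (hodd : Odd p)
    (P : Type*) [Group P] [Finite P]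
    (hcard : Nat.card P = p ^ 3) (hZcard : Nat.card (Subgroup.center P) = p)
    (hexp : ∀ g : P, g ^ p = 1)
    (R : Subgroup P) (hR : Nat.card R = p) (hRnc : R ≠ Subgroup.center P)
    (Q : Subgroup P) (hQ : Nat.card Q = p ^ 2) :
    (R ≤ Q → Nat.card {V : Subgroup P // V ≤ Q ∧ ∃ g : P, V = conjSub g R} = p) ∧
    (¬ R ≤ Q → Nat.card {V : Subgroup P // V ≤ Q ∧ ∃ g : P, V = conjSub g R} = 0) := by
  haveI : Fact p.Prime := ⟨hp⟩
  -- a generator of R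
  have hRbot : R ≠ ⊥ := by
    intro h
    rw [h, Subgroup.card_bot] at hR
    exact hp.one_lt.ne hR
  obtain ⟨x, hxR, hx1⟩ : ∃ x ∈ R, x ≠ (1 : P) := by
    rcases R.bot_or_exists_ne_one with h | h
    · exact absurd h hRbot
    · exact h
  have hordx : orderOf x = p := orderOf_eq_prime (hexp x) hx1
  have hZx : Subgroup.zpowers x = R :=
    Subgroup.eq_of_le_of_card_ge (Subgroup.zpowers_le.2 hxR)
      (by rw [hR, Nat.card_zpowers, hordx])
  -- x is not central
  have hxnc : x ∉ Subgroup.center P := by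
    intro hx
    apply hRnc
    exact Subgroup.eq_of_le_of_card_ge (hZx ▸ Subgroup.zpowers_le.2 hx)
      (by rw [hR, hZcard])
  -- commutators are central
  have hquot : Nat.card (P ⧸ Subgroup.center P) = p ^ 2 := by
    have h := Subgroup.card_eq_card_quotient_mul_card_subgroup (Subgroup.center P)
    rw [hcard, hZcard] at h
    have h2 : p ^ 2 * p = Nat.card (P ⧸ Subgroup.center P) * p := by rw [← h]; ring
    exact (Nat.eq_of_mul_eq_mul_right hp.pos h2).symm
  have hcommQuot := IsPGroup.commutative_of_card_eq_prime_sq (p := p) hquot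
  have hcommZ : ∀ a b : P, a * b * a⁻¹ * b⁻¹ ∈ Subgroup.center P := by
    intro a b
    rw [← QuotientGroup.eq_one_iff]
    simp only [QuotientGroup.mk_mul, QuotientGroup.mk_inv]
    rw [hcommQuot ((a : P) : P ⧸ Subgroup.center P) b]
    group
  have hc_mem : ∀ g : P, x⁻¹ * g * x * g⁻¹ ∈ Subgroup.center P := by
    intro g
    have h := hcommZ x⁻¹ g
    rwa [inv_inv] at h
  -- the commutator homomorphism
  let φ : P →* Subgroup.center P :=
    { toFun := fun g => ⟨x⁻¹ * g * x * g⁻¹, hc_mem g⟩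
      map_one' := by ext; simp
      map_mul' := by
        intro g h
        ext
        show x⁻¹ * (g * h) * x * (g * h)⁻¹ = (x⁻¹ * g * x * g⁻¹) * (x⁻¹ * h * x * h⁻¹)
        have hh := Subgroup.mem_center_iff.mp (hc_mem h)
        calc x⁻¹ * (g * h) * x * (g * h)⁻¹
            = x⁻¹ * g * (x * (x⁻¹ * h * x * h⁻¹)) * g⁻¹ := by group
          _ = x⁻¹ * g * x * ((x⁻¹ * h * x * h⁻¹) * g⁻¹) := by group
          _ = x⁻¹ * g * x * (g⁻¹ * (x⁻¹ * h * x * h⁻¹)) := by rw [← hh g⁻¹]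
          _ = (x⁻¹ * g * x * g⁻¹) * (x⁻¹ * h * x * h⁻¹) := by group }
  have hφval : ∀ g : P, (φ g : P) = x⁻¹ * g * x * g⁻¹ := fun g => rfl
  -- φ is surjective
  have hφsurj : Function.Surjective φ := by
    rw [← MonoidHom.range_eq_top]
    have hdvd : Nat.card φ.range ∣ p := hZcard ▸ Subgroup.card_subgroup_dvd_card φ.range
    rcases hp.eq_one_or_self_of_dvd _ hdvd with h1 | hpd
    · exfalso
      rw [Subgroup.card_eq_one] at h1
      apply hxnc
      rw [Subgroup.mem_center_iff]
      intro g
      have hg1 : φ g = 1 := by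
        have : φ g ∈ φ.range := ⟨g, rfl⟩
        rwa [h1, Subgroup.mem_bot] at this
      have hgv : x⁻¹ * g * x * g⁻¹ = 1 := congrArg Subtype.val hg1
      have h2 : x⁻¹ * g * x = g := by rwa [mul_inv_eq_one] at hgv
      calc g * x = x * (x⁻¹ * g * x) := by group
        _ = x * g := by rw [h2]
    · exact Subgroup.eq_top_of_card_eq _ (by rw [hpd, hZcard])
  -- description of conjugates of R
  have hconj : ∀ g : P, conjSub g R = Subgroup.zpowers (x * (φ g : P)) := by
    intro g
    rw [conjSub, ← hZx, MonoidHom.map_zpowers]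
    congr 1
    show g * x * g⁻¹ = x * (x⁻¹ * g * x * g⁻¹)
    group
  have hmem : ∀ z : Subgroup.center P, ∃ g : P,
      Subgroup.zpowers (x * (z : P)) = conjSub g R := by
    intro z
    obtain ⟨g, hg⟩ := hφsurj z
    exact ⟨g, by rw [hconj g, hg]⟩
  -- injectivity on generators
  have hinj : ∀ z w : Subgroup.center P,
      Subgroup.zpowers (x * (z : P)) = Subgroup.zpowers (x * (w : P)) → z = w := by
    intro z w hzw
    have hzc : ∀ g : P, g * (z : P) = z * g := fun g => Subgroup.mem_center_iff.mp z.2 g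
    have hcx : Commute x (z : P) := (hzc x)
    have hxw : x * (w : P) ∈ Subgroup.zpowers (x * (z : P)) := hzw ▸ Subgroup.mem_zpowers _
    obtain ⟨k, hk0⟩ := hxw
    have hk : x ^ k * (z : P) ^ k = x * (w : P) := by
      rw [← hcx.mul_zpow]; exact hk0
    -- hk : x ^ k * z ^ k = x * w
    have hxk : x ^ (k - 1) = (w : P) * ((z : P) ^ k)⁻¹ := by
      have h2 : x ^ k = x * (w : P) * ((z : P) ^ k)⁻¹ := by rw [← hk]; group
      calc x ^ (k - 1) = x⁻¹ * x ^ k := by group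
        _ = x⁻¹ * (x * (w : P) * ((z : P) ^ k)⁻¹) := by rw [h2]
        _ = (w : P) * ((z : P) ^ k)⁻¹ := by group
    have hmemc : x ^ (k - 1) ∈ Subgroup.center P := by
      rw [hxk]
      exact mul_mem w.2 (inv_mem (zpow_mem z.2 k))
    have hx1k : x ^ (k - 1) = 1 := by
      by_contra hne
      have hord' : orderOf (x ^ (k - 1)) = p := orderOf_eq_prime (hexp _) hne
      have heq : Subgroup.zpowers (x ^ (k - 1)) = Subgroup.center P :=
        Subgroup.eq_of_le_of_card_ge (Subgroup.zpowers_le.2 hmemc)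
          (by rw [hZcard, Nat.card_zpowers, hord'])
      have hle2 : Subgroup.center P ≤ R := by
        rw [← heq, ← hZx]
        exact Subgroup.zpowers_le.2 (zpow_mem (Subgroup.mem_zpowers x) (k - 1))
      exact hRnc (Subgroup.eq_of_le_of_card_ge hle2 (by rw [hR, hZcard])).symm
    have hdvd : (p : ℤ) ∣ (k - 1) := by
      rw [← hordx]
      exact orderOf_dvd_iff_zpow_eq_one.mpr hx1k
    have hzk : (z : P) ^ k = (z : P) := by
      obtain ⟨m, hm⟩ := hdvd
      have hz1 : (z : P) ^ (k - 1) = 1 := by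
        rw [hm, zpow_mul, zpow_natCast, hexp (z : P), one_zpow]
      calc (z : P) ^ k = (z : P) ^ (k - 1) * z := by group
        _ = (z : P) := by rw [hz1, one_mul]
    have hxkx : x ^ k = x := by
      have h3 : x ^ k = x ^ (k - 1) * x := by group
      rw [h3, hx1k, one_mul]
    rw [hxkx, hzk] at hk
    exact Subtype.ext (mul_left_cancel hk)
  -- Q is commutative and contains the centre
  have hQcomm : ∀ a b : Q, a * b = b * a :=
    IsPGroup.commutative_of_card_eq_prime_sq (p := p) hQ
  have hZleQ : Subgroup.center P ≤ Q := by
    by_contra hn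
    have hd : Nat.card ↥(Subgroup.center P ⊓ Q) ∣ p :=
      hZcard ▸ Subgroup.card_dvd_of_le inf_le_left
    rcases hp.eq_one_or_self_of_dvd _ hd with h1 | hpd
    · rw [Subgroup.card_eq_one] at h1
      have hinj2 : Function.Injective
          (fun zq : (Subgroup.center P) × Q => (zq.1 : P) * zq.2) := by
        rintro ⟨z1, q1⟩ ⟨z2, q2⟩ he
        simp only at he
        have h2 : (z2 : P)⁻¹ * z1 = (q2 : P) * (q1 : P)⁻¹ := by
          calc (z2 : P)⁻¹ * z1 = (z2 : P)⁻¹ * ((z1 : P) * q1) * (q1 : P)⁻¹ := by group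
            _ = (z2 : P)⁻¹ * ((z2 : P) * q2) * (q1 : P)⁻¹ := by rw [he]
            _ = (q2 : P) * (q1 : P)⁻¹ := by group
        have hmem1 : (z2 : P)⁻¹ * z1 ∈ Subgroup.center P ⊓ Q := by
          rw [Subgroup.mem_inf]
          constructor
          · exact mul_mem ((Subgroup.center P).inv_mem z2.2) z1.2
          · rw [h2]
            exact mul_mem q2.2 (Q.inv_mem q1.2)
        rw [h1, Subgroup.mem_bot] at hmem1
        have hz12 : (z1 : P) = z2 := by
          have := (inv_mul_eq_one.mp hmem1)
          exact this.symm
        have hq12 : (q1 : P) = q2 := by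
          have h4 : (z1 : P) * q1 = z1 * q2 := by rw [he, hz12]
          exact mul_left_cancel h4
        exact Prod.ext (Subtype.ext hz12) (Subtype.ext hq12)
      have hcards : Nat.card ((Subgroup.center P) × Q) = Nat.card P := by
        rw [Nat.card_prod, hZcard, hQ, hcard]; ring
      have hbij := (Nat.bijective_iff_injective_and_card _).mpr ⟨hinj2, hcards⟩
      have hPcomm : ∀ a b : P, a * b = b * a := by
        intro a b
        obtain ⟨⟨z1, q1⟩, ha⟩ := hbij.2 a
        obtain ⟨⟨z2, q2⟩, hb⟩ := hbij.2 b
        simp only at ha hb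
        have hq : (q1 : P) * q2 = q2 * q1 := congrArg Subtype.val (hQcomm q1 q2)
        have hz1 : ∀ g : P, g * (z1 : P) = z1 * g :=
          fun g => Subgroup.mem_center_iff.mp z1.2 g
        have hz2 : ∀ g : P, g * (z2 : P) = z2 * g :=
          fun g => Subgroup.mem_center_iff.mp z2.2 g
        rw [← ha, ← hb]
        calc (z1 : P) * q1 * ((z2 : P) * q2)
            = (z1 : P) * ((q1 : P) * z2) * q2 := by group
          _ = (z1 : P) * ((z2 : P) * q1) * q2 := by rw [hz2 q1]
          _ = (z1 : P) * (z2 : P) * ((q1 : P) * q2) := by group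
          _ = (z1 : P) * (z2 : P) * ((q2 : P) * q1) := by rw [hq]
          _ = (z2 : P) * (z1 : P) * ((q2 : P) * q1) := by rw [hz1 (z2 : P)]
          _ = (z2 : P) * ((q2 : P) * z1) * q1 := by rw [hz1 (q2 : P)]; group
          _ = (z2 : P) * q2 * ((z1 : P) * q1) := by group
      have htop : Subgroup.center P = ⊤ := by
        rw [eq_top_iff]
        intro g _
        rw [Subgroup.mem_center_iff]
        intro h
        exact hPcomm h g
      have hfalse : p ^ 3 = p ^ 1 := by
        rw [← hcard, ← Subgroup.card_top, ← htop, hZcard, pow_one]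
      have := Nat.pow_right_injective hp.two_le hfalse
      omega
    · have heq : Subgroup.center P ⊓ Q = Subgroup.center P :=
        Subgroup.eq_of_le_of_card_ge inf_le_left (by rw [hpd, hZcard])
      exact hn (heq ▸ inf_le_right)
  -- the two counting statements
  constructor
  · intro hRQ
    have hxQ : x ∈ Q := hRQ hxR
    let f : Subgroup.center P → {V : Subgroup P // V ≤ Q ∧ ∃ g : P, V = conjSub g R} :=
      fun z => ⟨Subgroup.zpowers (x * (z : P)),
        Subgroup.zpowers_le.2 (mul_mem hxQ (hZleQ z.2)),
        by obtain ⟨g, hg⟩ := hmem z; exact ⟨g, hg⟩⟩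
    have hfbij : Function.Bijective f := by
      constructor
      · intro z w hzw
        exact hinj z w (congrArg Subtype.val hzw)
      · rintro ⟨V, hVQ, g, hVg⟩
        refine ⟨φ g, Subtype.ext ?_⟩
        show Subgroup.zpowers (x * (φ g : P)) = V
        rw [hVg, hconj g]
    rw [← Nat.card_eq_of_bijective f hfbij, hZcard]
  · intro hRQ
    have hempty : IsEmpty {V : Subgroup P // V ≤ Q ∧ ∃ g : P, V = conjSub g R} := by
      constructor
      rintro ⟨V, hVQ, g, hVg⟩
      apply hRQ
      rw [← hZx, Subgroup.zpowers_le]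
      have hxz : x * (φ g : P) ∈ V := by
        rw [hVg, hconj g]; exact Subgroup.mem_zpowers _
      have h1 : x * (φ g : P) ∈ Q := hVQ hxz
      have h2 : (φ g : P) ∈ Q := hZleQ (φ g).2
      have h3 := mul_mem h1 (inv_mem h2)
      rwa [mul_inv_cancel_right] at h3
    exact Nat.card_of_isEmpty
end

section
/- Let P be an extraspecial group of order p^5 and exponent p with center Z (p odd). If Q ≤ P has order p and Q ∩ Z = 1, then N_P(Q)/Q is extraspecial of order p^3 and exponent p; if Q ≤ P has order p² and Q ∩ Z = 1, then N_P(Q)/Q is cyclic of order p. -/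
/-!
Since commutators are central and `|Z| = p`, the map `x ↦ ⁅x, q⁆` is a homomorphism `P → Z` with
kernel `C_P(q)`, so a non-central element has a centralizer of index `p`; and `Q ∩ Z = 1` forces
`N_P(Q) = C_P(Q)`. Counting shows that `P` has no abelian subgroup `A` of index `p`: for `a ∉ A`,
`A ∩ C_P(a)` has order `≥ p³ > |Z|`, so it contains a non-central `m`, and then `A = C_P(m) ∋ a`.

If `|Q| = p` then `N_P(Q) = C_P(q)` has index `p`, so it is nonabelian; its commutators lie in `Z`,
hence outside `Q`, so `N_P(Q)/Q` is a nonabelian group of order `p³`. Its centre has order `p`,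
since a centre of order `≥ p²` would leave a cyclic central quotient.
If `|Q| = p²` then `QZ`, of order `p³`, is central in `C_P(Q) ≤ C_P(q)`; index `p` would make
`C_P(Q)` abelian, so `C_P(Q)` has index `p²` and `N_P(Q)/Q` has order `p`.
-/

/-- A group is extraspecial of order `p ^ 3` and exponent `p`:
it has order `p ^ 3`, its centre has order `p`, and every element has order dividing `p`. -/
def IsExtraspecialP3 (p : ℕ) (X : Type*) [Group X] : Prop :=
  Nat.card X = p ^ 3 ∧ Nat.card (Subgroup.center X) = p ∧ ∀ x : X, x ^ p = 1

open scoped commutatorElement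

open Subgroup

theorem eq_prime_sq_of_dvd_prime_pow {p n m : ℕ} (hp : p.Prime) (hn : n ∣ p ^ m) (hpn : p ∣ n)
    (hle : n ≤ p ^ 2) (hne : n ≠ p) : n = p ^ 2 := by
  obtain ⟨k, -, rfl⟩ := (Nat.dvd_prime_pow hp).mp hn
  have hk1 : 1 ≤ k := (Nat.pow_dvd_pow_iff_le_right hp.one_lt).mp (by rwa [pow_one])
  have hk2 : k ≤ 2 := (Nat.pow_le_pow_iff_right hp.one_lt).mp hle
  obtain rfl | rfl : k = 1 ∨ k = 2 := by omega
  · exact absurd (pow_one p) hne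
  · rfl

section Cardinalities

variable {p : ℕ} {G : Type*} [Group G]

theorem isMulCommutative_of_card_le_prime_mul_card_center [Finite G] (hp : p.Prime)
    (hG : IsPGroup p G) (h : Nat.card G ≤ p * Nat.card (center G)) : IsMulCommutative G := by
  have := Fact.mk hp
  obtain ⟨n, hn⟩ := hG.index (center G)
  have hle : p ^ n ≤ p ^ 1 := by
    have hZ : 0 < Nat.card (center G) := Nat.card_pos
    rw [← (center G).card_mul_index, hn] at h
    nlinarith
  have : IsCyclic (G ⧸ center G) := isCyclic_of_card_dvd_prime (p := p) <| by
    rw [← index_eq_card, hn]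
    simpa using pow_dvd_pow p ((Nat.pow_le_pow_iff_right hp.one_lt).mp hle)
  exact isMulCommutative_of_isCyclic_quotient_center_self G

theorem card_center_eq_prime_of_card_eq_prime_pow_three (hp : p.Prime)
    (hG : Nat.card G = p ^ 3) (hnc : ¬ IsMulCommutative G) : Nat.card (center G) = p := by
  have := Fact.mk hp
  have : Finite G := Nat.finite_of_card_ne_zero (by rw [hG]; exact pow_ne_zero 3 hp.ne_zero)
  obtain ⟨k, hk, hZ⟩ := IsPGroup.card_center_eq_prime_pow hG (by norm_num)
  obtain rfl | hk2 : k = 1 ∨ 2 ≤ k := by omega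
  · rwa [pow_one] at hZ
  · refine absurd (isMulCommutative_of_card_le_prime_mul_card_center hp (.of_card hG) ?_) hnc
    rw [hG, hZ, ← pow_succ']
    exact Nat.pow_le_pow_right hp.pos (by omega)

theorem card_quotient_subgroupOf_mul_index_mul_card {H K : Subgroup G} (h : H ≤ K) :
    Nat.card (K ⧸ H.subgroupOf K) * K.index * Nat.card H = Nat.card G := by
  rw [← index_eq_card, ← relIndex, relIndex_mul_index h, mul_comm, card_mul_index]

theorem card_sup_eq_mul_of_inf_eq_bot {H K : Subgroup G} [K.Normal] (h : H ⊓ K = ⊥) :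
    Nat.card (H ⊔ K : Subgroup G) = Nat.card H * Nat.card K := by
  rw [← relIndex_bot_left, ← relIndex_mul_relIndex ⊥ K _ bot_le le_sup_right,
    relIndex_sup_right, relIndex_bot_left, relIndex,
    subgroupOf_eq_bot.mpr (disjoint_iff.mpr (inf_comm H K ▸ h)), index_bot, mul_comm]

theorem card_le_card_center_of_le_centralizer [Finite G] {H K : Subgroup G} (hHK : H ≤ K)
    (hH : H ≤ centralizer K) : Nat.card H ≤ Nat.card (center K) := by
  rw [← Nat.card_congr (subgroupOfEquivOfLe hHK).toEquiv]
  refine card_le_of_le fun x hx => mem_center_iff.mpr fun y => Subtype.ext ?_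
  exact mem_centralizer_iff.mp (hH (mem_subgroupOf.mp hx)) y y.2

end Cardinalities

section CentralCommutators

variable {P : Type*} [Group P]

theorem commutatorElement_mul_left_of_central (hcomm : ∀ x y : P, ⁅x, y⁆ ∈ center P)
    (x y q : P) : ⁅x * y, q⁆ = ⁅x, q⁆ * ⁅y, q⁆ := by
  have hy := mem_center_iff.mp (hcomm y q)
  rw [commutatorElement_mul_left_eq_conj_mul, hy x, mul_inv_cancel_right, hy]

def centralCommutatorHom (hcomm : ∀ x y : P, ⁅x, y⁆ ∈ center P) (q : P) : P →* center P where
  toFun x := ⟨⁅x, q⁆, hcomm x q⟩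
  map_one' := Subtype.ext (commutatorElement_one_left q)
  map_mul' x y := Subtype.ext (commutatorElement_mul_left_of_central hcomm x y q)

theorem ker_centralCommutatorHom (hcomm : ∀ x y : P, ⁅x, y⁆ ∈ center P) (q : P) :
    (centralCommutatorHom hcomm q).ker = centralizer {q} := by
  ext x
  simp [centralCommutatorHom, Subtype.ext_iff, commutatorElement_eq_one_iff_mul_comm,
    mem_centralizer_singleton_iff, eq_comm]

theorem index_centralizer_singleton_dvd (hcomm : ∀ x y : P, ⁅x, y⁆ ∈ center P) (q : P) :
    (centralizer {q}).index ∣ Nat.card (center P) := by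
  rw [← ker_centralCommutatorHom hcomm, index_ker]
  exact card_subgroup_dvd_card _

theorem index_centralizer_singleton {p : ℕ} (hp : p.Prime)
    (hcomm : ∀ x y : P, ⁅x, y⁆ ∈ center P) (hZ : Nat.card (center P) = p) {q : P}
    (hq : q ∉ center P) : (centralizer {q}).index = p := by
  refine ((Nat.dvd_prime hp).mp (hZ ▸ index_centralizer_singleton_dvd hcomm q)).resolve_left ?_
  rwa [index_eq_one, centralizer_eq_top_iff_subset, Set.singleton_subset_iff]

theorem normalizer_eq_centralizer_of_inf_center_eq_bot (hcomm : ∀ x y : P, ⁅x, y⁆ ∈ center P)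
    {Q : Subgroup P} (hQZ : Q ⊓ center P = ⊥) : normalizer (Q : Set P) = centralizer Q := by
  refine le_antisymm (fun x hx => mem_centralizer_iff.mpr fun h hh => ?_)
    (centralizer_le_normalizer _)
  have hQ : ⁅x, h⁆ ∈ Q := by
    rw [commutatorElement_def]
    exact Q.mul_mem ((mem_normalizer_iff.mp hx h).mp hh) (Q.inv_mem hh)
  have h1 : ⁅x, h⁆ = 1 := disjoint_def.mp (disjoint_iff.mpr hQZ) hQ (hcomm x h)
  exact (commutatorElement_eq_one_iff_mul_comm.mp h1).symm

theorem isMulCommutative_of_isMulCommutative_quotient (hcomm : ∀ x y : P, ⁅x, y⁆ ∈ center P)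
    {H K : Subgroup P} (hKZ : K ⊓ center P = ⊥) [(K.subgroupOf H).Normal]
    [IsMulCommutative (H ⧸ K.subgroupOf H)] : IsMulCommutative H := by
  refine ⟨⟨fun a b => ?_⟩⟩
  have hK : ⁅a, b⁆ ∈ K.subgroupOf H := by
    rw [← QuotientGroup.eq_one_iff, ← QuotientGroup.mk'_apply, map_commutatorElement,
      commutatorElement_eq_one_iff_mul_comm]
    exact IsMulCommutative.is_comm.comm _ _
  have h1 : ⁅(a : P), (b : P)⁆ = 1 := disjoint_def.mp (disjoint_iff.mpr hKZ) hK (hcomm a b)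
  exact Subtype.ext (commutatorElement_eq_one_iff_mul_comm.mp h1)

theorem not_isMulCommutative_of_index_eq_prime [Finite P] {p : ℕ} (hp : p.Prime)
    (hcomm : ∀ x y : P, ⁅x, y⁆ ∈ center P) (hZ : Nat.card (center P) = p)
    (hP : p ^ 3 < Nat.card P) {A : Subgroup P} (hA : A.index = p) : ¬ IsMulCommutative A := by
  intro hAc
  obtain ⟨a, ha⟩ : ∃ a, a ∉ A := by
    by_contra! h
    rw [(eq_top_iff' A).mpr h, index_top] at hA
    exact hp.one_lt.ne hA
  obtain ⟨m, ⟨hmA, hma⟩, hmZ⟩ : ∃ m ∈ A ⊓ centralizer {a}, m ∉ center P := by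
    by_contra! h
    have hcard : Nat.card (A ⊓ centralizer {a} : Subgroup P) ≤ p := hZ ▸ card_le_of_le h
    have hCa : (centralizer {a}).index ≤ p :=
      Nat.le_of_dvd hp.pos (hZ ▸ index_centralizer_singleton_dvd hcomm a)
    have hindex : (A ⊓ centralizer {a}).index ≤ p * p :=
      index_inf_le.trans (by rw [hA]; exact Nat.mul_le_mul_left p hCa)
    have : Nat.card P ≤ p ^ 3 := by
      rw [← card_mul_index (A ⊓ centralizer {a}), pow_succ', sq]
      exact Nat.mul_le_mul hcard hindex
    omega
  have hAm : A ≤ centralizer {m} := fun x hx =>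
    mem_centralizer_singleton_iff.mpr (congrArg Subtype.val (hAc.is_comm.comm ⟨x, hx⟩ ⟨m, hmA⟩))
  have hCmA : centralizer {m} ≤ A := by
    have := relIndex_mul_index hAm
    rw [hA, index_centralizer_singleton hp hcomm hZ hmZ, Nat.mul_eq_right hp.ne_zero] at this
    exact relIndex_eq_one.mp this
  exact ha (hCmA (mem_centralizer_singleton_iff.mpr (mem_centralizer_singleton_iff.mp hma).symm))

end CentralCommutators

section Extraspecial

variable {p : ℕ} {P : Type*} [Group P] [Finite P]

theorem isExtraspecialP3_normalizer_quotient (hp : p.Prime) (hcard : Nat.card P = p ^ 5)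
    (hZ : Nat.card (center P) = p) (hexp : ∀ g : P, g ^ p = 1)
    (hcomm : ∀ x y : P, ⁅x, y⁆ ∈ center P) {Q : Subgroup P} (hQZ : Q ⊓ center P = ⊥)
    (hQ : Nat.card Q = p) :
    IsExtraspecialP3 p (normalizer (Q : Set P) ⧸ Q.subgroupOf (normalizer (Q : Set P))) := by
  have := Fact.mk hp
  set N := normalizer (Q : Set P) with hNdef
  obtain ⟨q, hqQ⟩ := Q.isCyclic_iff_exists_zpowers_eq_top.mp (isCyclic_of_prime_card hQ)
  have hq : q ∉ center P := fun hqZ => by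
    have hq1 : q = 1 := disjoint_def.mp (disjoint_iff.mpr hQZ) (hqQ ▸ mem_zpowers q) hqZ
    rw [← hqQ, hq1, zpowers_one_eq_bot, card_bot] at hQ
    exact hp.one_lt.ne hQ
  have hN : N.index = p := by
    rw [hNdef, normalizer_eq_centralizer_of_inf_center_eq_bot hcomm hQZ, ← hqQ, zpowers_eq_closure,
      centralizer_closure, index_centralizer_singleton hp hcomm hZ hq]
  have hNQ : Nat.card (N ⧸ Q.subgroupOf N) = p ^ 3 := by
    have := card_quotient_subgroupOf_mul_index_mul_card (le_normalizer : Q ≤ N)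
    rw [hN, hQ, hcard] at this
    exact Nat.eq_of_mul_eq_mul_right (Nat.mul_pos hp.pos hp.pos) (by rw [← mul_assoc, this]; ring)
  refine ⟨hNQ, card_center_eq_prime_of_card_eq_prime_pow_three hp hNQ fun _ => ?_, ?_⟩
  · exact not_isMulCommutative_of_index_eq_prime hp hcomm hZ
      (hcard ▸ Nat.pow_lt_pow_right hp.one_lt (by norm_num)) hN
      (isMulCommutative_of_isMulCommutative_quotient hcomm hQZ)
  · intro x
    induction x using QuotientGroup.induction_on with | H x => ?_
    have hx : x ^ p = 1 := Subtype.ext (hexp x)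
    rw [← QuotientGroup.mk_pow, hx, QuotientGroup.mk_one]

theorem index_centralizer_of_card_eq_prime_sq (hp : p.Prime) (hcard : Nat.card P = p ^ 5)
    (hZ : Nat.card (center P) = p) (hcomm : ∀ x y : P, ⁅x, y⁆ ∈ center P)
    {Q : Subgroup P} (hQZ : Q ⊓ center P = ⊥) (hQ : Nat.card Q = p ^ 2) :
    (centralizer (Q : Set P)).index = p ^ 2 := by
  have := Fact.mk hp
  set C := centralizer (Q : Set P)
  have hQZ_le : Q ⊔ center P ≤ C := sup_le
    (le_centralizer_iff_isMulCommutative.mpr (IsPGroup.isMulCommutative_of_card_eq_prime_sq hQ))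
    (center_le_centralizer _)
  have hQZ_comm : Q ⊔ center P ≤ centralizer C := sup_le (le_centralizer_iff.mp le_rfl)
    (center_le_centralizer _)
  have hQZcard : Nat.card (Q ⊔ center P : Subgroup P) = p ^ 3 := by
    rw [card_sup_eq_mul_of_inf_eq_bot hQZ, hQ, hZ]
    ring
  obtain ⟨q, hqQ, hq1⟩ := Q.bot_or_exists_ne_one.resolve_left fun h => by
    rw [h, card_bot] at hQ
    exact (Nat.one_lt_pow two_ne_zero hp.one_lt).ne hQ
  have hq : q ∉ center P := fun hqZ => hq1 (disjoint_def.mp (disjoint_iff.mpr hQZ) hqQ hqZ)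
  have hCP := card_mul_index C
  rw [hcard] at hCP
  refine eq_prime_sq_of_dvd_prime_pow hp (hcard ▸ index_dvd_card C) ?_ ?_ ?_
  · exact index_centralizer_singleton hp hcomm hZ hq ▸
      index_dvd_of_le (centralizer_le (Set.singleton_subset_iff.mpr hqQ))
  · refine Nat.le_of_mul_le_mul_left ?_ (pow_pos hp.pos 3)
    calc p ^ 3 * C.index ≤ Nat.card C * C.index :=
          Nat.mul_le_mul_right _ (hQZcard ▸ card_le_of_le hQZ_le)
      _ = p ^ 3 * p ^ 2 := by rw [hCP]; ring
  · intro hCp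
    have hC4 : Nat.card C = p ^ 4 :=
      Nat.eq_of_mul_eq_mul_right hp.pos (by rw [← hCp, hCP, hCp]; ring)
    refine not_isMulCommutative_of_index_eq_prime hp hcomm hZ
      (hcard ▸ Nat.pow_lt_pow_right hp.one_lt (by norm_num)) hCp
      (isMulCommutative_of_card_le_prime_mul_card_center hp (.of_card hC4) ?_)
    calc Nat.card C = p * p ^ 3 := by rw [hC4]; ring
      _ ≤ p * Nat.card (center C) :=
        Nat.mul_le_mul_left p (hQZcard ▸ card_le_card_center_of_le_centralizer hQZ_le hQZ_comm)

theorem card_normalizer_quotient_of_card_eq_prime_sq (hp : p.Prime)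
    (hcard : Nat.card P = p ^ 5) (hZ : Nat.card (center P) = p)
    (hcomm : ∀ x y : P, ⁅x, y⁆ ∈ center P) {Q : Subgroup P} (hQZ : Q ⊓ center P = ⊥)
    (hQ : Nat.card Q = p ^ 2) :
    Nat.card (normalizer (Q : Set P) ⧸ Q.subgroupOf (normalizer (Q : Set P))) = p := by
  have hN : (normalizer (Q : Set P)).index = p ^ 2 := by
    rw [normalizer_eq_centralizer_of_inf_center_eq_bot hcomm hQZ]
    exact index_centralizer_of_card_eq_prime_sq hp hcard hZ hcomm hQZ hQ
  have := card_quotient_subgroupOf_mul_index_mul_card (le_normalizer : Q ≤ normalizer (Q : Set P))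
  rw [hN, hQ, hcard] at this
  exact Nat.eq_of_mul_eq_mul_right (pow_pos hp.pos 4)
    (by rw [show p ^ 4 = p ^ 2 * p ^ 2 by ring, ← mul_assoc, this]; ring)

end Extraspecial

theorem normalizer_quotient_structure_general {p : ℕ} (hp : p.Prime)
    (P : Type*) [Group P] [Finite P]
    (hcard : Nat.card P = p ^ 5) (hZcard : Nat.card (Subgroup.center P) = p)
    (hexp : ∀ g : P, g ^ p = 1)
    (hcommZ : ∀ x y : P, ⁅x, y⁆ ∈ Subgroup.center P)
    (Q : Subgroup P) (hQZ : Q ⊓ Subgroup.center P = ⊥) :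
    (Nat.card Q = p →
      IsExtraspecialP3 p (↥(Subgroup.normalizer (Q : Set P)) ⧸ Q.subgroupOf (Subgroup.normalizer (Q : Set P)))) ∧
    (Nat.card Q = p ^ 2 →
      IsCyclic (↥(Subgroup.normalizer (Q : Set P)) ⧸ Q.subgroupOf (Subgroup.normalizer (Q : Set P))) ∧
        Nat.card (↥(Subgroup.normalizer (Q : Set P)) ⧸ Q.subgroupOf (Subgroup.normalizer (Q : Set P))) = p) := by
  have := Fact.mk hp
  refine ⟨isExtraspecialP3_normalizer_quotient hp hcard hZcard hexp hcommZ hQZ, fun hQ => ?_⟩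
  have hNQ := card_normalizer_quotient_of_card_eq_prime_sq hp hcard hZcard hcommZ hQZ hQ
  exact ⟨isCyclic_of_prime_card hNQ, hNQ⟩

/-- Let `P` be extraspecial of order `p^5` and exponent `p` (`p` odd) with
centre `Z`. If `Q ≤ P` has order `p` and `Q ∩ Z = 1`, then `N_P(Q)/Q` is extraspecial of
order `p^3` and exponent `p`; if `Q` has order `p²` and `Q ∩ Z = 1`, then `N_P(Q)/Q` is
cyclic of order `p`. -/
theorem normalizer_quotient_structure {p : ℕ} (hp : p.Prime) (hodd : Odd p)
    (P : Type*) [Group P] [Finite P]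
    (hcard : Nat.card P = p ^ 5) (hZcard : Nat.card (Subgroup.center P) = p)
    (hexp : ∀ g : P, g ^ p = 1)
    (hcommZ : ∀ x y : P, ⁅x, y⁆ ∈ Subgroup.center P)
    (Q : Subgroup P) (hQZ : Q ⊓ Subgroup.center P = ⊥) :
    (Nat.card Q = p →
      IsExtraspecialP3 p (↥(Subgroup.normalizer (Q : Set P)) ⧸ Q.subgroupOf (Subgroup.normalizer (Q : Set P)))) ∧
    (Nat.card Q = p ^ 2 →
      IsCyclic (↥(Subgroup.normalizer (Q : Set P)) ⧸ Q.subgroupOf (Subgroup.normalizer (Q : Set P))) ∧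
        Nat.card (↥(Subgroup.normalizer (Q : Set P)) ⧸ Q.subgroupOf (Subgroup.normalizer (Q : Set P))) = p) :=
  normalizer_quotient_structure_general hp P hcard hZcard hexp hcommZ Q hQZ
end

section
/- Let E be an elementary abelian p-group of rank 3, i.e., E ≅ (ℤ/pℤ)³. Given integers v_{P,R} for each subgroup R of order p of E and integers v_{Q,1} for each subgroup Q of order p² of E, there exist integers m_1 and m_R (R of order p) such that v_{P,R} = m_R for all R and v_{Q,1} = m_1 + Σ_{R ≰ Q} m_R for all Q, if and only if the quantity v_{Q,1} + Σ_{1<X<Q} v_{P,X} is independent of the choice of Q of order p². -/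
open scoped Classical

/-- Let `E ≅ (ℤ/pℤ)³`. Given integers `v_{P,R}` for each subgroup `R` of
order `p` and `v_{Q,1}` for each subgroup `Q` of order `p²`, there exist integers `m_1`
and `m_R` with `v_{P,R} = m_R` and `v_{Q,1} = m_1 + Σ_{R ≰ Q} m_R` if and only if
`v_{Q,1} + Σ_{1<X<Q} v_{P,X}` is independent of the choice of `Q` of order `p²`. -/
theorem rank_three_gluing_criterion {p : ℕ} (hp : p.Prime)
    (G : Type*) [CommGroup G] [Finite G] [Fintype (Subgroup G)]
    (hG : Nonempty (G ≃* (Fin 3 → Multiplicative (ZMod p))))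
    (vP : Subgroup G → ℤ) (vQ : Subgroup G → ℤ) :
    (∃ (m₁ : ℤ) (m : Subgroup G → ℤ),
      (∀ R : Subgroup G, Nat.card R = p → vP R = m R) ∧
      (∀ Q : Subgroup G, Nat.card Q = p ^ 2 → vQ Q = m₁ +
        ∑ R ∈ Finset.univ.filter (fun R : Subgroup G => Nat.card R = p ∧ ¬ R ≤ Q), m R)) ↔
    (∀ Q Q' : Subgroup G, Nat.card Q = p ^ 2 → Nat.card Q' = p ^ 2 →
      vQ Q + ∑ X ∈ Finset.univ.filter (fun X : Subgroup G => Nat.card X = p ∧ X < Q), vP X =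
      vQ Q' + ∑ X ∈ Finset.univ.filter (fun X : Subgroup G => Nat.card X = p ∧ X < Q'), vP X)
    := by
  have hpne : p ≠ p ^ 2 := by nlinarith [hp.one_lt]
  have key : ∀ (f : Subgroup G → ℤ) (Q : Subgroup G), Nat.card Q = p ^ 2 →
      (∑ X ∈ Finset.univ.filter (fun X : Subgroup G => Nat.card X = p ∧ X < Q), f X) +
      (∑ R ∈ Finset.univ.filter (fun R : Subgroup G => Nat.card R = p ∧ ¬ R ≤ Q), f R) =
      ∑ R ∈ Finset.univ.filter (fun R : Subgroup G => Nat.card R = p), f R := by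
    intro f Q hQ
    have e1 : Finset.univ.filter (fun X : Subgroup G => Nat.card X = p ∧ X < Q)
        = (Finset.univ.filter (fun X : Subgroup G => Nat.card X = p)).filter
            (fun X => X ≤ Q) := by
      ext X
      simp only [Finset.mem_filter, Finset.mem_univ, true_and, Finset.filter_filter]
      constructor
      · rintro ⟨h1, h2⟩; exact ⟨h1, h2.le⟩
      · rintro ⟨h1, h2⟩
        refine ⟨h1, lt_of_le_of_ne h2 ?_⟩
        rintro rfl
        exact hpne (h1.symm.trans hQ)
    have e2 : Finset.univ.filter (fun X : Subgroup G => Nat.card X = p ∧ ¬ X ≤ Q)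
        = (Finset.univ.filter (fun X : Subgroup G => Nat.card X = p)).filter
            (fun X => ¬ X ≤ Q) := by
      ext X
      simp [Finset.mem_filter, and_assoc]
    rw [e1, e2, Finset.sum_filter_add_sum_filter_not]
  constructor
  · rintro ⟨m₁, m, hm, hQeq⟩ Q Q' hQ hQ'
    have hP : ∀ Q'' : Subgroup G, Nat.card Q'' = p ^ 2 →
        vQ Q'' + ∑ X ∈ Finset.univ.filter
          (fun X : Subgroup G => Nat.card X = p ∧ X < Q''), vP X =
        m₁ + ∑ R ∈ Finset.univ.filter (fun R : Subgroup G => Nat.card R = p), m R := by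
      intro Q'' hQ''
      rw [hQeq Q'' hQ'']
      have hsum : ∑ X ∈ Finset.univ.filter
          (fun X : Subgroup G => Nat.card X = p ∧ X < Q''), vP X =
          ∑ X ∈ Finset.univ.filter
          (fun X : Subgroup G => Nat.card X = p ∧ X < Q''), m X := by
        refine Finset.sum_congr rfl fun X hX => ?_
        simp only [Finset.mem_filter] at hX
        exact hm X hX.2.1
      rw [hsum]
      have := key m Q'' hQ''
      linarith
    rw [hP Q hQ, hP Q' hQ']
  · intro h
    by_cases hex : ∃ Q0 : Subgroup G, Nat.card Q0 = p ^ 2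
    · obtain ⟨Q0, hQ0⟩ := hex
      refine ⟨vQ Q0 - ∑ R ∈ Finset.univ.filter
        (fun R : Subgroup G => Nat.card R = p ∧ ¬ R ≤ Q0), vP R, vP,
        fun R _ => rfl, ?_⟩
      intro Q hQ
      have h1 := h Q Q0 hQ hQ0
      have k1 := key vP Q hQ
      have k2 := key vP Q0 hQ0
      linarith
    · exact ⟨0, vP, fun R _ => rfl, fun Q hQ => absurd ⟨Q, hQ⟩ hex⟩
end

section
/- Let P be an extraspecial p-group of order p³ and exponent p (p odd) with center Z. Suppose given integers v_{Q,1}, one for each of the p+1 subgroups Q of order p², together with an integer v_{P,Z} and, for each P-conjugacy class of non-central order-p subgroups, an integer. If there exist integers m_1, m_Z, and conjugation-invariant integers m_R (R non-central of order p) with v_{P,Z} = m_Z and v_{Q,1} = m_1 + Σ_{[R] ≰ Q} m_R + (1-p) Σ_{[R] ≤ Q} m_R for all Q, then v_{Q,1} ≡ v_{Q',1} (mod p) for all Q, Q' of order p². Conversely, if all v_{Q,1} are congruent mod p, such integers m exist. -/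
open scoped Classical Pointwise

section Aux
variable {P : Type*} [Group P]

lemma mem_conjSub {g x : P} {R : Subgroup P} : x ∈ conjSub g R ↔ ∃ r ∈ R, g * r * g⁻¹ = x := by
  simp [conjSub, Subgroup.mem_map, MulAut.conj]

lemma conjSub_conjSub (g h : P) (R : Subgroup P) :
    conjSub g (conjSub h R) = conjSub (g * h) R := by
  simp only [conjSub, Subgroup.map_map]
  congr 1
  ext x
  simp [MulAut.conj, mul_assoc]

lemma conjSub_one (R : Subgroup P) : conjSub 1 R = R := by
  ext x; simp [mem_conjSub]

lemma card_conjSub (g : P) (R : Subgroup P) : Nat.card (conjSub g R) = Nat.card R :=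
  (Nat.card_congr (R.equivMapOfInjective _ (MulAut.conj g).injective).toEquiv).symm

lemma conjSub_center (g : P) : conjSub g (Subgroup.center P) = Subgroup.center P := by
  ext x
  constructor
  · rintro hx
    rw [mem_conjSub] at hx
    obtain ⟨r, hr, rfl⟩ := hx
    have : g * r * g⁻¹ = r := by
      rw [Subgroup.mem_center_iff.mp hr g]; group
    rwa [this]
  · intro hx
    rw [mem_conjSub]
    exact ⟨x, hx, by rw [Subgroup.mem_center_iff.mp hx g]; group⟩

end Aux

section GroupLemmas

variable {p : ℕ} {P : Type*} [Group P] [Finite P]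

lemma sq_dvd_absurd {p : ℕ} (hp : p.Prime) (h : p ^ 2 ∣ p) : False := by
  have h1 := Nat.le_of_dvd hp.pos h
  have h2 := hp.two_le
  nlinarith

omit [Finite P] in
lemma comm_mem_center (hp : p.Prime) (hcard : Nat.card P = p ^ 3)
    (hZcard : Nat.card (Subgroup.center P) = p) (a b : P) :
    a * b * a⁻¹ * b⁻¹ ∈ Subgroup.center P := by
  haveI : Fact p.Prime := ⟨hp⟩
  have hq : Nat.card (P ⧸ Subgroup.center P) = p ^ 2 := by
    have h := Subgroup.card_eq_card_quotient_mul_card_subgroup (Subgroup.center P)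
    rw [hcard, hZcard] at h
    have h2 : Nat.card (P ⧸ Subgroup.center P) * p = p ^ 2 * p := by rw [← h]; ring
    exact Nat.eq_of_mul_eq_mul_right hp.pos h2
  have hcomm := IsPGroup.commutative_of_card_eq_prime_sq (p := p) hq
  rw [← QuotientGroup.eq_one_iff]
  have h1 : ((a * b * a⁻¹ * b⁻¹ : P) : P ⧸ Subgroup.center P)
      = (a : P ⧸ Subgroup.center P) * (b : P ⧸ Subgroup.center P) *
        (a : P ⧸ Subgroup.center P)⁻¹ * (b : P ⧸ Subgroup.center P)⁻¹ := rfl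
  rw [h1, hcomm (a : P ⧸ Subgroup.center P) (b : P ⧸ Subgroup.center P)]
  group

omit [Finite P] in
lemma conjSub_le_sup_center (hp : p.Prime) (hcard : Nat.card P = p ^ 3)
    (hZcard : Nat.card (Subgroup.center P) = p) (g : P) (R : Subgroup P) :
    conjSub g R ≤ R ⊔ Subgroup.center P := by
  intro x hx
  rw [mem_conjSub] at hx
  obtain ⟨r, hr, rfl⟩ := hx
  have h1 : g * r * g⁻¹ = (g * r * g⁻¹ * r⁻¹) * r := by group
  rw [h1]
  exact Subgroup.mul_mem _
    (le_sup_right (α := Subgroup P) (comm_mem_center hp hcard hZcard g r))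
    (le_sup_left (α := Subgroup P) hr)

lemma center_le_of_card (hp : p.Prime) (hcard : Nat.card P = p ^ 3)
    (hZcard : Nat.card (Subgroup.center P) = p) (Q : Subgroup P)
    (hQ : Nat.card Q = p ^ 2) : Subgroup.center P ≤ Q := by
  haveI : Fact p.Prime := ⟨hp⟩
  by_contra hnle
  have hlt : Q < Q ⊔ Subgroup.center P := by
    rcases lt_or_eq_of_le (le_sup_left : Q ≤ Q ⊔ Subgroup.center P) with h | h
    · exact h
    · exact absurd (by rw [h]; exact le_sup_right : Subgroup.center P ≤ Q) hnle
  have hd1 : p ^ 2 ∣ Nat.card (Q ⊔ Subgroup.center P : Subgroup P) := by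
    rw [← hQ]; exact Subgroup.card_dvd_of_le le_sup_left
  have hd2 : Nat.card (Q ⊔ Subgroup.center P : Subgroup P) ∣ p ^ 3 := by
    rw [← hcard]; exact Subgroup.card_subgroup_dvd_card _
  obtain ⟨k, hk3, hkeq⟩ := (Nat.dvd_prime_pow hp).mp hd2
  have hk2 : 2 ≤ k := by
    by_contra hk
    push_neg at hk
    have h2 : p ^ 2 ∣ p := by
      have h3 := hd1
      rw [hkeq] at h3
      have := h3.trans (pow_dvd_pow p (show k ≤ 1 by omega))
      rwa [pow_one] at this
    exact sq_dvd_absurd hp h2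
  have htop : Q ⊔ Subgroup.center P = ⊤ := by
    rcases (show k = 2 ∨ k = 3 by omega) with rfl | rfl
    · exact absurd (Subgroup.eq_of_le_of_card_ge le_sup_left (by rw [hkeq, hQ])) hlt.ne
    · exact Subgroup.eq_top_of_card_eq _ (by rw [hkeq, hcard])
  have hQcent : Q ≤ Subgroup.center P := by
    intro q hq
    rw [Subgroup.mem_center_iff]
    intro g
    have hg : g ∈ ((Q : Set P) * (Subgroup.center P : Set P)) := by
      rw [← Subgroup.mul_normal, htop]
      simp
    obtain ⟨a, ha, z, hz, rfl⟩ := hg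
    have hcomm := IsPGroup.commutative_of_card_eq_prime_sq (p := p) hQ ⟨a, ha⟩ ⟨q, hq⟩
    have haq : a * q = q * a := congrArg Subtype.val hcomm
    have hzc := Subgroup.mem_center_iff.mp hz
    calc a * z * q = a * q * z := by rw [mul_assoc, ← hzc q, ← mul_assoc]
      _ = q * a * z := by rw [haq]
      _ = q * (a * z) := by rw [mul_assoc]
  have h4 := Subgroup.card_dvd_of_le hQcent
  rw [hQ, hZcard] at h4
  exact sq_dvd_absurd hp h4

lemma sup_center_eq (hp : p.Prime) (hcard : Nat.card P = p ^ 3)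
    (hZcard : Nat.card (Subgroup.center P) = p) {Q R : Subgroup P}
    (hQ : Nat.card Q = p ^ 2) (hR : Nat.card R = p) (hRc : R ≠ Subgroup.center P)
    (hRQ : R ≤ Q) : R ⊔ Subgroup.center P = Q := by
  have hle : R ⊔ Subgroup.center P ≤ Q :=
    sup_le hRQ (center_le_of_card hp hcard hZcard Q hQ)
  have hd1 : p ∣ Nat.card (R ⊔ Subgroup.center P : Subgroup P) := by
    rw [← hR]; exact Subgroup.card_dvd_of_le le_sup_left
  have hd2 : Nat.card (R ⊔ Subgroup.center P : Subgroup P) ∣ p ^ 2 := by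
    rw [← hQ]; exact Subgroup.card_dvd_of_le hle
  obtain ⟨k, hk2, hkeq⟩ := (Nat.dvd_prime_pow hp).mp hd2
  have hk1 : 1 ≤ k := by
    by_contra hk
    push_neg at hk
    have : p ∣ 1 := by
      have := hd1; rw [hkeq, (show k = 0 by omega), pow_zero] at this; exact this
    exact absurd (Nat.le_of_dvd one_pos this) (by have := hp.two_le; omega)
  rcases (show k = 1 ∨ k = 2 by omega) with rfl | rfl
  · exfalso
    have e1 : R = R ⊔ Subgroup.center P :=
      Subgroup.eq_of_le_of_card_ge le_sup_left (by rw [hkeq, pow_one, hR])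
    have e2 : Subgroup.center P = R ⊔ Subgroup.center P :=
      Subgroup.eq_of_le_of_card_ge le_sup_right (by rw [hkeq, pow_one, hZcard])
    exact hRc (e1.trans e2.symm)
  · exact Subgroup.eq_of_le_of_card_ge hle (by rw [hkeq, hQ])

lemma exists_gen (hp : p.Prime) {R : Subgroup P} (hR : Nat.card R = p) :
    ∃ x : P, x ∈ R ∧ x ≠ 1 ∧ R = Subgroup.zpowers x ∧ orderOf x = p := by
  rcases R.bot_or_exists_ne_one with h | ⟨x, hx, hx1⟩
  · exfalso
    rw [h, Subgroup.card_bot] at hR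
    exact hp.one_lt.ne hR
  · have hord : orderOf x = p := by
      have hd : orderOf x ∣ p := by
        rw [← hR, ← Nat.card_zpowers]
        exact Subgroup.card_dvd_of_le (Subgroup.zpowers_le.mpr hx)
      rcases (Nat.Prime.eq_one_or_self_of_dvd hp _ hd) with h1 | h1
      · exact absurd (orderOf_eq_one_iff.mp h1) hx1
      · exact h1
    refine ⟨x, hx, hx1, ?_, hord⟩
    exact (Subgroup.eq_of_le_of_card_ge (Subgroup.zpowers_le.mpr hx)
      (by rw [hR, Nat.card_zpowers, hord])).symm

lemma comm_surj (hp : p.Prime) (hcard : Nat.card P = p ^ 3)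
    (hZcard : Nat.card (Subgroup.center P) = p) {r : P}
    (hr : r ∉ Subgroup.center P) :
    ∀ z ∈ Subgroup.center P, ∃ g : P, g * r * g⁻¹ * r⁻¹ = z := by
  let f : P →* Subgroup.center P :=
    { toFun := fun g => ⟨g * r * g⁻¹ * r⁻¹, comm_mem_center hp hcard hZcard g r⟩
      map_one' := Subtype.ext (by simp)
      map_mul' := by
        intro a b
        apply Subtype.ext
        show (a * b) * r * (a * b)⁻¹ * r⁻¹ = (a * r * a⁻¹ * r⁻¹) * (b * r * b⁻¹ * r⁻¹)
        have hc := Subgroup.mem_center_iff.mp (comm_mem_center hp hcard hZcard b r)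
        calc (a * b) * r * (a * b)⁻¹ * r⁻¹
            = a * (b * r * b⁻¹ * r⁻¹) * r * a⁻¹ * r⁻¹ := by group
          _ = (b * r * b⁻¹ * r⁻¹) * (a * r * a⁻¹ * r⁻¹) := by
              rw [hc a]; group
          _ = (a * r * a⁻¹ * r⁻¹) * (b * r * b⁻¹ * r⁻¹) := by
              rw [hc (a * r * a⁻¹ * r⁻¹)] }
  intro z hz
  have hdvd : Nat.card f.range ∣ p := by
    rw [← hZcard]; exact Subgroup.card_subgroup_dvd_card f.range
  rcases hp.eq_one_or_self_of_dvd _ hdvd with h1 | h1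
  · exfalso
    apply hr
    rw [Subgroup.mem_center_iff]
    intro g
    have hbot : f.range = ⊥ := Subgroup.eq_bot_of_card_eq _ h1
    have hfg : f g = 1 := by
      have : f g ∈ f.range := ⟨g, rfl⟩
      rwa [hbot, Subgroup.mem_bot] at this
    have h2 : g * r * g⁻¹ * r⁻¹ = 1 := congrArg Subtype.val hfg
    have h3 : (g * r) * (r * g)⁻¹ = 1 := by
      rw [mul_inv_rev, ← mul_assoc]; exact h2
    exact mul_inv_eq_one.mp h3
  · have htop : f.range = ⊤ := Subgroup.eq_top_of_card_eq _ (by rw [h1, hZcard])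
    have : (⟨z, hz⟩ : Subgroup.center P) ∈ f.range := by rw [htop]; trivial
    obtain ⟨g, hg⟩ := this
    exact ⟨g, congrArg Subtype.val hg⟩

lemma conj_of_le (hp : p.Prime) (hcard : Nat.card P = p ^ 3)
    (hZcard : Nat.card (Subgroup.center P) = p) (hexp : ∀ g : P, g ^ p = 1)
    {Q R R' : Subgroup P} (hQ : Nat.card Q = p ^ 2)
    (hR : Nat.card R = p) (hR' : Nat.card R' = p)
    (hRc : R ≠ Subgroup.center P) (hR'c : R' ≠ Subgroup.center P)
    (hRQ : R ≤ Q) (hR'Q : R' ≤ Q) : ∃ g : P, R' = conjSub g R := by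
  haveI : Fact p.Prime := ⟨hp⟩
  obtain ⟨r, hrR, hr1, hRgen, hrord⟩ := exists_gen hp hR
  obtain ⟨r', hr'R, hr'1, hR'gen, hr'ord⟩ := exists_gen hp hR'
  have hrnc : r ∉ Subgroup.center P := by
    intro h
    apply hRc
    refine Subgroup.eq_of_le_of_card_ge ?_ (by rw [hR, hZcard])
    rw [hRgen]; exact Subgroup.zpowers_le.mpr h
  have hsup : R ⊔ Subgroup.center P = Q := sup_center_eq hp hcard hZcard hQ hR hRc hRQ
  have hr'Q : r' ∈ ((R : Set P) * (Subgroup.center P : Set P)) := by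
    rw [← Subgroup.mul_normal, hsup]
    exact hR'Q hr'R
  obtain ⟨a, haR, z, hz, haz⟩ := hr'Q
  obtain ⟨i, hi⟩ := Subgroup.mem_zpowers_iff.mp (by rw [hRgen] at haR; exact haR)
  have hppos : (0 : ℤ) < p := by exact_mod_cast hp.pos
  set j : ℕ := (i % (p : ℤ)).toNat with hj
  have hjnn : 0 ≤ i % (p : ℤ) := Int.emod_nonneg i (ne_of_gt hppos)
  have hrj : r ^ j = r ^ i := by
    rw [← zpow_natCast, hj, Int.toNat_of_nonneg hjnn, ← hrord]
    exact zpow_mod_orderOf r i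
  have hjnd : ¬ (p ∣ j) := by
    intro hdvd
    have h1 : r ^ j = 1 := orderOf_dvd_iff_pow_eq_one.mp (by rw [hrord]; exact hdvd)
    have h2 : r' ∈ Subgroup.center P := by
      rw [← haz, ← hi, ← hrj, h1]
      simpa using hz
    apply hR'c
    refine Subgroup.eq_of_le_of_card_ge ?_ (by rw [hR', hZcard])
    rw [hR'gen]; exact Subgroup.zpowers_le.mpr h2
  have hcop : (Nat.card (Subgroup.center P)).Coprime j := by
    rw [hZcard]; exact (hp.coprime_iff_not_dvd).mpr hjnd
  set z' : Subgroup.center P := (powCoprime hcop).symm ⟨z, hz⟩ with hz'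
  have hz'pow : (z' : P) ^ j = z := by
    have h := (powCoprime hcop).apply_symm_apply ⟨z, hz⟩
    rw [powCoprime_apply] at h
    have h2 := congrArg Subtype.val h
    push_cast at h2
    exact h2
  obtain ⟨g, hg⟩ := comm_surj hp hcard hZcard hrnc (z' : P) z'.2
  have hgr : g * r * g⁻¹ = (z' : P) * r := by rw [← hg]; group
  refine ⟨g, ?_⟩
  have hmem : r' ∈ conjSub g R := by
    rw [mem_conjSub]
    refine ⟨r ^ j, R.pow_mem hrR j, ?_⟩
    have h1 : g * r ^ j * g⁻¹ = (g * r * g⁻¹) ^ j := by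
      rw [conj_pow]
    have h2 : ((z' : P) * r) ^ j = (z' : P) ^ j * r ^ j :=
      Commute.mul_pow (Subgroup.mem_center_iff.mp z'.2 r).symm j
    have hzz : z ∈ Subgroup.center P := hz
    rw [h1, hgr, h2, hz'pow, hrj, hi, ← haz]
    exact (Subgroup.mem_center_iff.mp hzz a).symm
  refine (Subgroup.eq_of_le_of_card_ge ?_ (by rw [hR', card_conjSub, hR]))
  rw [hR'gen]; exact Subgroup.zpowers_le.mpr hmem

end GroupLemmas

/-- Let `P` be extraspecial of order `p³` and exponent `p` (`p` odd) with
centre `Z`, and let `𝓡` be a set of representatives of the conjugacy classes of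
non-central subgroups of order `p`. Given integers `v_{Q,1}` for the subgroups `Q` of
order `p²` and an integer `v_{P,Z}`, there exist integers `m₁`, `m_Z` and
conjugation-invariant integers `m_R` with `v_{P,Z} = m_Z` and
`v_{Q,1} = m₁ + Σ_{[R] ≰ Q} m_R + (1-p) Σ_{[R] ≤ Q} m_R` for all `Q`, if and only if all
the `v_{Q,1}` are congruent modulo `p`. -/
theorem extraspecial_p3_gluing_criterion {p : ℕ} (hp : p.Prime) (hodd : Odd p)
    (P : Type*) [Group P] [Finite P] [Fintype (Subgroup P)]
    (hcard : Nat.card P = p ^ 3) (hZcard : Nat.card (Subgroup.center P) = p)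
    (hexp : ∀ g : P, g ^ p = 1)
    (𝓡 : Finset (Subgroup P))
    (h𝓡₁ : ∀ R ∈ 𝓡, Nat.card R = p ∧ R ≠ Subgroup.center P)
    (h𝓡₂ : ∀ S : Subgroup P, Nat.card S = p → S ≠ Subgroup.center P →
      ∃! R : Subgroup P, R ∈ 𝓡 ∧ ∃ g : P, S = conjSub g R)
    (vPZ : ℤ) (vQ : Subgroup P → ℤ) :
    (∃ (m₁ mZ : ℤ) (m : Subgroup P → ℤ),
      (∀ (g : P) (R : Subgroup P), Nat.card R = p → R ≠ Subgroup.center P →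
        m (conjSub g R) = m R) ∧
      vPZ = mZ ∧
      (∀ Q : Subgroup P, Nat.card Q = p ^ 2 →
        vQ Q = m₁ + ∑ R ∈ 𝓡.filter (fun R => ¬ R ≤ Q), m R +
          ((1 : ℤ) - p) * ∑ R ∈ 𝓡.filter (fun R => R ≤ Q), m R)) ↔
    (∀ Q Q' : Subgroup P, Nat.card Q = p ^ 2 → Nat.card Q' = p ^ 2 →
      (p : ℤ) ∣ vQ Q - vQ Q') := by
  haveI : Fact p.Prime := ⟨hp⟩
  constructor
  · rintro ⟨m₁, mZ, m, hconj, hvz, hQall⟩ Q Q' hQ hQ'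
    have hsum : ∀ S : Subgroup P,
        ∑ R ∈ 𝓡.filter (fun R => R ≤ S), m R +
          ∑ R ∈ 𝓡.filter (fun R => ¬ R ≤ S), m R = ∑ R ∈ 𝓡, m R :=
      fun S => Finset.sum_filter_add_sum_filter_not 𝓡 (fun R => R ≤ S) m
    refine ⟨(∑ R ∈ 𝓡.filter (fun R => R ≤ Q'), m R) -
      ∑ R ∈ 𝓡.filter (fun R => R ≤ Q), m R, ?_⟩
    have e1 := hQall Q hQ
    have e2 := hQall Q' hQ'
    have s1 := hsum Q
    have s2 := hsum Q'
    rw [e1, e2]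
    ring_nf
    linear_combination s1 - s2
  · intro hcong
    by_cases hex : ∃ Q : Subgroup P, Nat.card Q = p ^ 2
    · obtain ⟨Q₀, hQ₀⟩ := hex
      set m : Subgroup P → ℤ := fun S =>
        if Nat.card S = p ∧ S ≠ Subgroup.center P then
          (vQ Q₀ - vQ (S ⊔ Subgroup.center P)) / p else 0 with hm
      refine ⟨vQ Q₀ - ∑ R ∈ 𝓡, m R, vPZ, m, ?_, rfl, ?_⟩
      · intro g R hRp hRc
        have h1 : Nat.card (conjSub g R) = p := by rw [card_conjSub, hRp]
        have h2 : conjSub g R ≠ Subgroup.center P := by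
          intro h
          apply hRc
          have h3 := congrArg (conjSub g⁻¹) h
          rwa [conjSub_conjSub, inv_mul_cancel, conjSub_one, conjSub_center] at h3
        have h3 : conjSub g R ⊔ Subgroup.center P = R ⊔ Subgroup.center P := by
          apply le_antisymm
          · exact sup_le (conjSub_le_sup_center hp hcard hZcard g R) le_sup_right
          · apply sup_le ?_ le_sup_right
            have h4 : R = conjSub g⁻¹ (conjSub g R) := by
              rw [conjSub_conjSub, inv_mul_cancel, conjSub_one]
            nth_rewrite 1 [h4]
            exact conjSub_le_sup_center hp hcard hZcard g⁻¹ (conjSub g R)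
        rw [hm]
        simp only
        rw [if_pos ⟨h1, h2⟩, if_pos ⟨hRp, hRc⟩, h3]
      · intro Q hQ
        have hZQ : Subgroup.center P ≤ Q := center_le_of_card hp hcard hZcard Q hQ
        have hQnc : ¬ Q ≤ Subgroup.center P := by
          intro h
          have hd := Subgroup.card_dvd_of_le h
          rw [hQ, hZcard] at hd
          exact sq_dvd_absurd hp hd
        obtain ⟨q, hqQ, hqnc⟩ := SetLike.not_le_iff_exists.mp hQnc
        have hq1 : q ≠ 1 := fun h => hqnc (h ▸ Subgroup.one_mem _)
        have hqord : orderOf q = p := by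
          rcases hp.eq_one_or_self_of_dvd _ (orderOf_dvd_of_pow_eq_one (hexp q)) with h | h
          · exact absurd (orderOf_eq_one_iff.mp h) hq1
          · exact h
        have hScard : Nat.card (Subgroup.zpowers q) = p := by
          rw [Nat.card_zpowers, hqord]
        have hSnc : Subgroup.zpowers q ≠ Subgroup.center P :=
          fun h => hqnc (h ▸ Subgroup.mem_zpowers q)
        obtain ⟨R₀, ⟨hR₀mem, g₀, hg₀⟩, huniq⟩ := h𝓡₂ _ hScard hSnc
        obtain ⟨hR₀p, hR₀c⟩ := h𝓡₁ R₀ hR₀mem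
        have hR₀Q : R₀ ≤ Q := by
          have h4 : R₀ = conjSub g₀⁻¹ (Subgroup.zpowers q) := by
            rw [hg₀, conjSub_conjSub, inv_mul_cancel, conjSub_one]
          rw [h4]
          exact le_trans (conjSub_le_sup_center hp hcard hZcard _ _)
            (sup_le (Subgroup.zpowers_le.mpr hqQ) hZQ)
        have hfilter : 𝓡.filter (fun R => R ≤ Q) = {R₀} := by
          apply Finset.eq_singleton_iff_unique_mem.mpr
          refine ⟨Finset.mem_filter.mpr ⟨hR₀mem, hR₀Q⟩, ?_⟩
          intro R' hR'
          obtain ⟨hR'mem, hR'Q⟩ := Finset.mem_filter.mp hR'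
          obtain ⟨hR'p, hR'c⟩ := h𝓡₁ R' hR'mem
          obtain ⟨g, hg⟩ := conj_of_le hp hcard hZcard hexp hQ hR₀p hR'p hR₀c hR'c hR₀Q hR'Q
          obtain ⟨Rr, _, huniq'⟩ := h𝓡₂ R' hR'p hR'c
          have e1 : R' = Rr := huniq' R' ⟨hR'mem, 1, (conjSub_one R').symm⟩
          have e2 : R₀ = Rr := huniq' R₀ ⟨hR₀mem, g, hg⟩
          rw [e1, e2]
        have hdvd : (p : ℤ) ∣ vQ Q₀ - vQ Q := hcong Q₀ Q hQ₀ hQ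
        have hsupQ : R₀ ⊔ Subgroup.center P = Q :=
          sup_center_eq hp hcard hZcard hQ hR₀p hR₀c hR₀Q
        have hmR₀ : m R₀ = (vQ Q₀ - vQ Q) / p := by
          rw [hm]
          simp only
          rw [if_pos ⟨hR₀p, hR₀c⟩, hsupQ]
        have hsum := Finset.sum_filter_add_sum_filter_not 𝓡 (fun R => R ≤ Q) m
        rw [hfilter, Finset.sum_singleton, hmR₀] at hsum
        rw [hfilter, Finset.sum_singleton, hmR₀]
        have hpd : (p : ℤ) * ((vQ Q₀ - vQ Q) / p) = vQ Q₀ - vQ Q :=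
          Int.mul_ediv_cancel' hdvd
        linear_combination hpd - hsum
    · exact ⟨0, vPZ, fun _ => 0, fun _ _ _ _ => rfl, rfl,
        fun Q hQ => absurd ⟨Q, hQ⟩ hex⟩
end
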